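/- The unique shift-invariant measure μ_𝕂 on the Thue-Morse subshift satisfies μ_𝕂((σ∘H)ᵏ(Σ) ∩ 𝕂) = 2^{-k} for every k ≥ 0, hence μ_𝕂 of the difference set (σ∘H)ᵏ(Σ) \ (σ∘H)^{k+1}(Σ) intersected with 𝕂 equals 2^{-(k+1)}. -/

import Mathlib

open Filter Topology MeasureTheory

/-- The left shift on the full 2-shift `Σ = {0,1}^ℕ`. -/
def shift (x : ℕ → Bool) : ℕ → Bool := fun n => x (n + 1)

/-- The Thue–Morse substitution `H : 0 → 01, 1 → 10`, acting on sequences. -/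
def subH (x : ℕ → Bool) : ℕ → Bool :=
  fun n => if n % 2 = 0 then x (n / 2) else !x (n / 2)

/-- The Thue–Morse sequence: `tm n` is the parity of the number of 1s in
the binary expansion of `n`. -/
def tm (n : ℕ) : Bool := (Nat.digits 2 n).count 1 % 2 == 1

/-- The fixed point of `subH` starting with 0. -/
def rho0 : ℕ → Bool := tm

/-- The fixed point of `subH` starting with 1. -/
def rho1 : ℕ → Bool := fun n => !tm n

/-- `rhoB b` is the fixed point of `subH` starting with digit `b`. -/
def rhoB : Bool → ℕ → Bool
  | false => rho0
  | true => rho1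

/-- The digit-flipping involution. -/
def flipSeq (x : ℕ → Bool) : ℕ → Bool := fun n => !x n

/-- Prepend a digit to a sequence. -/
def consTM (a : Bool) (x : ℕ → Bool) : ℕ → Bool
  | 0 => a
  | n + 1 => x n

/-- The Thue–Morse subshift: the closure of the shift orbit of `rho0`. -/
def TMK : Set (ℕ → Bool) := closure {y | ∃ n, y = shift^[n] rho0}

/-- The renormalization operator `𝓡V = V ∘ σ ∘ H + V ∘ H`. -/
def RenOp (V : (ℕ → Bool) → ℝ) : (ℕ → Bool) → ℝ :=
  fun x => V (shift (subH x)) + V (subH x)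

/-- The Birkhoff sum `S_k V = ∑_{i<k} V ∘ σⁱ`. -/
def birkhoff (V : (ℕ → Bool) → ℝ) (k : ℕ) (x : ℕ → Bool) : ℝ :=
  ∑ i ∈ Finset.range k, V (shift^[i] x)

/-- The potential `U_c`: value `c` on `[01]`, `-c` on `[10]`, `0` on `[00] ∪ [11]`. -/
def Upot (c : ℝ) (x : ℕ → Bool) : ℝ :=
  if x 0 = false ∧ x 1 = true then c
  else if x 0 = true ∧ x 1 = false then -c else 0

/-- The sliding block code `π(x)_k = 1` iff `x_k ≠ x_{k+1}`. -/
def piTM (x : ℕ → Bool) : ℕ → Bool := fun n => x n != x (n + 1)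

/-- The Feigenbaum substitution `0 → 11, 1 → 10`, acting on sequences. -/
def subHfeig (x : ℕ → Bool) : ℕ → Bool :=
  fun n => if n % 2 = 0 then true else !x (n / 2)

open Function Set
open scoped ENNReal

/-! The averaged push-forward `((σ ∘ H)_* μ + H_* μ) / 2` is again a shift-invariant probability
measure on `𝕂`, because `σ² ∘ H = H ∘ σ`; by unique ergodicity it equals `μ`, i.e.
`μ A = (μ ((σ ∘ H)⁻¹ A) + μ (H⁻¹ A)) / 2`. For `A = (σ ∘ H)^{k+1}(Σ) ∩ 𝕂` the first preimage is
`(σ ∘ H)^k(Σ) ∩ 𝕂` up to a null set, since `σ ∘ H` is injective and preserves `𝕂`. The second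
misses `𝕂`: if `H x` lies in the range of `σ ∘ H` then `x` is constant, while no point of `𝕂`
starts with a cube `aaa`. So the measures halve at each step. -/

lemma shift_iterate_apply (n : ℕ) (x : ℕ → Bool) (i : ℕ) : shift^[n] x i = x (n + i) := by
  induction n generalizing x with
  | zero => simp
  | succ n ih =>
    rw [iterate_succ_apply, ih]
    exact congrArg x (by omega)

lemma subH_two_mul (x : ℕ → Bool) (m : ℕ) : subH x (2 * m) = x m := by
  simp [subH]

lemma subH_two_mul_add_one (x : ℕ → Bool) (m : ℕ) : subH x (2 * m + 1) = !x m := by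
  simp [subH, Nat.add_mod, Nat.add_div]

lemma semiconj_subH_shift : Semiconj subH shift (shift^[2]) := by
  intro x
  funext n
  rw [shift_iterate_apply]
  obtain ⟨m, rfl | rfl⟩ := Nat.even_or_odd' n
  · rw [show 2 + 2 * m = 2 * (m + 1) by ring, subH_two_mul, subH_two_mul]
    rfl
  · rw [show 2 + (2 * m + 1) = 2 * (m + 1) + 1 by ring, subH_two_mul_add_one,
      subH_two_mul_add_one]
    rfl

lemma injective_shift_comp_subH : Injective (shift ∘ subH) := fun x y h =>
  funext fun m => by
    simpa [shift, subH_two_mul_add_one] using congrFun h (2 * m)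

lemma eq_succ_of_subH_mem_range {x : ℕ → Bool} (hx : subH x ∈ range (shift ∘ subH)) (m : ℕ) :
    x (m + 1) = x m := by
  obtain ⟨z, hz⟩ := hx
  have h₁ := congrFun hz (2 * m + 1)
  have h₂ := congrFun hz (2 * (m + 1))
  simp only [comp_apply, shift] at h₁ h₂
  rw [show 2 * m + 1 + 1 = 2 * (m + 1) by ring, subH_two_mul, subH_two_mul_add_one] at h₁
  rw [subH_two_mul_add_one, subH_two_mul] at h₂
  rw [← h₂, h₁, Bool.not_not]

lemma tm_two_mul (n : ℕ) : tm (2 * n) = tm n := by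
  rcases Nat.eq_zero_or_pos n with rfl | hn
  · rfl
  · simp [tm, Nat.digits_def' one_lt_two (by omega : 0 < 2 * n)]

lemma tm_two_mul_add_one (n : ℕ) : tm (2 * n + 1) = !tm n := by
  simp only [tm, Nat.digits_def' one_lt_two (by omega : 0 < 2 * n + 1)]
  rw [show (2 * n + 1) % 2 = 1 by omega, show (2 * n + 1) / 2 = n by omega,
    List.count_cons_self]
  rcases Nat.mod_two_eq_zero_or_one ((Nat.digits 2 n).count 1) with h | h <;>
    simp [Nat.add_mod, h]

lemma subH_rho0 : subH rho0 = rho0 := by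
  funext n
  obtain ⟨m, rfl | rfl⟩ := Nat.even_or_odd' n
  · rw [subH_two_mul]
    exact (tm_two_mul m).symm
  · rw [subH_two_mul_add_one]
    exact (tm_two_mul_add_one m).symm

lemma subH_shift_iterate_rho0 (n : ℕ) : subH (shift^[n] rho0) = shift^[2 * n] rho0 := by
  rw [(semiconj_subH_shift.iterate_right n).eq, subH_rho0, iterate_mul]

lemma tm_not_three_equal (n : ℕ) : ¬ (tm n = tm (n + 1) ∧ tm (n + 1) = tm (n + 2)) := by
  rintro ⟨h₁, h₂⟩
  obtain ⟨m, rfl | rfl⟩ := Nat.even_or_odd' n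
  · rw [tm_two_mul, tm_two_mul_add_one] at h₁
    cases tm m <;> simp at h₁
  · rw [show 2 * m + 1 + 1 = 2 * (m + 1) by ring, show 2 * m + 1 + 2 = 2 * (m + 1) + 1 by ring,
      tm_two_mul, tm_two_mul_add_one] at h₂
    cases tm (m + 1) <;> simp at h₂

lemma continuous_shift : Continuous shift :=
  continuous_pi fun n => continuous_apply (n + 1)

lemma continuous_subH : Continuous subH :=
  continuous_pi fun n => by
    by_cases h : n % 2 = 0 <;> simp only [subH, h, if_true, if_false]
    · exact continuous_apply _
    · exact (continuous_of_discreteTopology (f := not)).comp (continuous_apply _)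

lemma mapsTo_shift_TMK : MapsTo shift TMK TMK := fun _ hx =>
  map_mem_closure continuous_shift hx fun _ ⟨n, hy⟩ =>
    ⟨n + 1, by rw [hy, iterate_succ_apply']⟩

lemma mapsTo_subH_TMK : MapsTo subH TMK TMK := fun _ hx =>
  map_mem_closure continuous_subH hx fun _ ⟨n, hy⟩ => ⟨2 * n, by rw [hy, subH_shift_iterate_rho0]⟩

lemma TMK_subset_not_three_equal : TMK ⊆ {x | ¬ (x 0 = x 1 ∧ x 1 = x 2)} := by
  refine closure_minimal ?_ ((isClosed_discrete
    {p : Bool × Bool × Bool | ¬ (p.1 = p.2.1 ∧ p.2.1 = p.2.2)}).preimage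
      (f := fun x : ℕ → Bool => (x 0, x 1, x 2)) (by fun_prop))
  rintro _ ⟨n, rfl⟩
  simpa [shift_iterate_apply, rho0] using tm_not_three_equal n

lemma subH_preimage_range_inter_TMK : subH ⁻¹' range (shift ∘ subH) ∩ TMK = ∅ := by
  refine eq_empty_of_forall_notMem fun x ⟨hx, hxK⟩ => TMK_subset_not_three_equal hxK ?_
  exact ⟨(eq_succ_of_subH_mem_range hx 0).symm, (eq_succ_of_subH_mem_range hx 1).symm⟩

lemma measurableSet_range_iterate_inter_TMK (k : ℕ) :
    MeasurableSet (range (shift ∘ subH)^[k] ∩ TMK) :=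
  (isCompact_range ((continuous_shift.comp continuous_subH).iterate k)).isClosed.measurableSet.inter
    isClosed_closure.measurableSet

lemma Function.Injective.preimage_range_iterate_succ {α : Type*} {f : α → α} (hf : Injective f)
    (k : ℕ) : f ⁻¹' range f^[k + 1] = range f^[k] := by
  rw [iterate_succ', range_comp, hf.preimage_image]

section Renormalization

variable {X : Type*} [MeasurableSpace X] {σ H : X → X} {μ : Measure X}

lemma MeasureTheory.MeasurePreserving.smul_map_comp_add_map (hμ : MeasurePreserving σ μ μ)
    (hσ : Measurable σ) (hH : Measurable H) (hσH : Semiconj H σ (σ^[2])) (c : ℝ≥0∞) :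
    MeasurePreserving σ (c • (μ.map (σ ∘ H) + μ.map H)) (c • (μ.map (σ ∘ H) + μ.map H)) := by
  refine ⟨hσ, ?_⟩
  have hcomm : σ ∘ (σ ∘ H) = H ∘ σ := hσH.comp_eq.symm
  rw [Measure.map_smul, Measure.map_add _ _ hσ, Measure.map_map hσ (hσ.comp hH),
    Measure.map_map hσ hH, hcomm, ← Measure.map_map hH hσ, hμ.map_eq, add_comm]

lemma map_apply_eq_one_of_mapsTo [IsProbabilityMeasure μ] {f : X → X} (hf : Measurable f)
    {K : Set X} (hK : MeasurableSet K) (hfK : MapsTo f K K) (hμK : μ K = 1) :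
    μ.map f K = 1 := by
  rw [Measure.map_apply hf hK]
  exact le_antisymm prob_le_one (hμK ▸ measure_mono hfK.subset_preimage)

lemma measure_eq_half_preimage_add_preimage [IsProbabilityMeasure μ] (hσ : Measurable σ)
    (hH : Measurable H) (hσH : Semiconj H σ (σ^[2])) (hμ : MeasurePreserving σ μ μ) {K : Set X}
    (hK : MeasurableSet K) (hσK : MapsTo σ K K) (hHK : MapsTo H K K) (hμK : μ K = 1)
    (huniq : ∀ ν : Measure X, IsProbabilityMeasure ν → MeasurePreserving σ ν ν → ν K = 1 → ν = μ)
    {s : Set X} (hs : MeasurableSet s) :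
    μ s = 2⁻¹ * (μ ((σ ∘ H) ⁻¹' s) + μ (H ⁻¹' s)) := by
  set ν := (2 : ℝ≥0∞)⁻¹ • (μ.map (σ ∘ H) + μ.map H)
  have hν : ∀ t, MeasurableSet t → ν t = 2⁻¹ * (μ.map (σ ∘ H) t + μ.map H t) := fun t _ => rfl
  have hνprob : IsProbabilityMeasure ν := ⟨by
    rw [hν univ .univ, Measure.map_apply (hσ.comp hH) .univ, Measure.map_apply hH .univ]
    simp [mul_add, ENNReal.inv_two_add_inv_two]⟩
  have hνK : ν K = 1 := by
    rw [hν K hK, map_apply_eq_one_of_mapsTo (hσ.comp hH) hK (hσK.comp hHK) hμK,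
      map_apply_eq_one_of_mapsTo hH hK hHK hμK, mul_add, mul_one, ENNReal.inv_two_add_inv_two]
  have hνμ : ν = μ :=
    huniq ν hνprob (hμ.smul_map_comp_add_map hσ hH hσH _) hνK
  calc μ s = ν s := by rw [hνμ]
    _ = _ := by rw [hν s hs, Measure.map_apply (hσ.comp hH) hs, Measure.map_apply hH hs]

end Renormalization

lemma measure_range_iterate_inter_TMK (mu : Measure (ℕ → Bool)) [IsProbabilityMeasure mu]
    (hinv : MeasurePreserving shift mu mu) (hK : mu TMK = 1)
    (huniq : ∀ nu : Measure (ℕ → Bool), IsProbabilityMeasure nu →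
      MeasurePreserving shift nu nu → nu TMK = 1 → nu = mu) (k : ℕ) :
    mu (range (shift ∘ subH)^[k] ∩ TMK) = 2⁻¹ ^ k := by
  set T := shift ∘ subH
  have hKm : MeasurableSet TMK := isClosed_closure.measurableSet
  have hKc : mu TMKᶜ = 0 := (prob_compl_eq_zero_iff hKm).2 hK
  induction k with
  | zero => simp [hK]
  | succ k ih =>
    have hT : mu (T ⁻¹' (range T^[k + 1] ∩ TMK)) = mu (range T^[k] ∩ TMK) := by
      rw [← measure_inter_conull hKc, preimage_inter, inter_assoc,
        inter_eq_right.2 (mapsTo_shift_TMK.comp mapsTo_subH_TMK).subset_preimage,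
        injective_shift_comp_subH.preimage_range_iterate_succ]
    have hH : mu (subH ⁻¹' (range T^[k + 1] ∩ TMK)) = 0 := by
      rw [← measure_inter_conull hKc]
      refine measure_mono_null ?_ measure_empty
      rw [← subH_preimage_range_inter_TMK, iterate_succ']
      exact inter_subset_inter_left _ (preimage_mono (inter_subset_left.trans
        (range_comp_subset_range _ _)))
    rw [measure_eq_half_preimage_add_preimage continuous_shift.measurable
      continuous_subH.measurable semiconj_subH_shift hinv hKm mapsTo_shift_TMK mapsTo_subH_TMK hK
      huniq (measurableSet_range_iterate_inter_TMK _), hT, hH, ih, add_zero, pow_succ']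

/-- the unique invariant measure `μ` of the Thue–Morse subshift
satisfies `μ((σ∘H)ᵏ(Σ) ∩ 𝕂) = 2^{-k}` and
`μ(((σ∘H)ᵏ(Σ) \ (σ∘H)^{k+1}(Σ)) ∩ 𝕂) = 2^{-(k+1)}` for all `k ≥ 0`. -/
theorem stmt15 (mu : Measure (ℕ → Bool)) [IsProbabilityMeasure mu]
    (hinv : MeasurePreserving shift mu mu) (hK : mu TMK = 1)
    (huniq : ∀ nu : Measure (ℕ → Bool), IsProbabilityMeasure nu →
      MeasurePreserving shift nu nu → nu TMK = 1 → nu = mu) :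
    ∀ k : ℕ,
      mu (Set.range ((shift ∘ subH)^[k]) ∩ TMK) = 1 / 2 ^ k ∧
      mu ((Set.range ((shift ∘ subH)^[k]) \ Set.range ((shift ∘ subH)^[k + 1])) ∩ TMK)
        = 1 / 2 ^ (k + 1) := by
  intro k
  have hμ := measure_range_iterate_inter_TMK mu hinv hK huniq
  simp only [one_div, ENNReal.inv_pow]
  refine ⟨hμ k, ?_⟩
  have hsub : range (shift ∘ subH)^[k + 1] ∩ TMK ⊆ range (shift ∘ subH)^[k] ∩ TMK :=
    inter_subset_inter_left _ (by rw [iterate_succ]; exact range_comp_subset_range _ _)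
  rw [inter_sdiff_distrib_right, measure_sdiff hsub
    (measurableSet_range_iterate_inter_TMK _).nullMeasurableSet (measure_ne_top _ _), hμ, hμ]
  refine ENNReal.sub_eq_of_eq_add (by simp) ?_
  rw [pow_succ, ← mul_add, ENNReal.inv_two_add_inv_two, mul_one]
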